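/- Let u_n and v_n be the normalized Maclaurin coefficients of e^{ipz}·I_ν(z) and of e^{−ipz}·I_ν(z) respectively (i denotes the imaginary unit). Then the n-th normalized Maclaurin coefficient of sin(pz)·I_ν(z) equals (u_n − v_n)/(2i) for every n ≥ 0; moreover u_0 = 1, u_1 = ip, v_0 = 1, v_1 = −ip, and for every n ≥ 1: u_{n+1} = (ip(2ν+2n+1)/((n+1)(2ν+n+1)))·u_n + ((p²+1)/((n+1)(2ν+n+1)))·u_{n−1} and v_{n+1} = −(ip(2ν+2n+1)/((n+1)(2ν+n+1)))·v_n + ((p²+1)/((n+1)(2ν+n+1)))·v_{n−1}. -/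

import Mathlib

open Complex

/-- The entire part of the modified Bessel function of the first kind:
`I_ν(z) = (z/2)^ν * modBesselSeries ν z`. -/
noncomputable def modBesselSeries (ν : ℂ) (z : ℂ) : ℂ :=
  ∑' k : ℕ, z ^ (2 * k) / (4 ^ k * (Nat.factorial k : ℂ) * Complex.Gamma (ν + (k : ℂ) + 1))

/-- The normalized `n`-th Maclaurin coefficient of `h(z) * I_ν(z)`:
`Γ(ν+1)` times the `n`-th Maclaurin coefficient of `z ↦ h z * modBesselSeries ν z`. -/
noncomputable def normCoeff (ν : ℂ) (h : ℂ → ℂ) (n : ℕ) : ℂ :=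
  Complex.Gamma (ν + 1) *
    (iteratedDeriv n (fun z => h z * modBesselSeries ν z) 0 / (Nat.factorial n : ℂ))

/-!
Let `B` be the Maclaurin series of `G_ν = modBesselSeries ν`. Bessel's equation for `I_ν`
becomes `z B'' + (2ν+1) B' = z B`. For `E = e^{az}` we have `E' = a E`, and the Leibniz
rule turns Bessel's equation into
`z F'' + (2ν+1) F' = 2a z F' + a(2ν+1) F + (1 - a²) z F` for `F = E B`.
Comparing coefficients of `z^n` gives the three-term recurrence, with `a = ±ip`, so that
`1 - a² = 1 + p²`. The sine case follows from `sin(pz) = (e^{ipz} - e^{-ipz}) / (2i)`.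
All of this is algebra in `ℂ⟦X⟧`; analysis only enters to see that Maclaurin series are
multiplicative (Leibniz rule for iterated derivatives) and that the Bessel series is entire.
-/

open PowerSeries Filter
open scoped Nat
open FormalMultilinearSeries (ofScalars ofScalars_norm ofScalars_apply_eq)

section BesselODE

variable {R : Type*} [CommRing R]

/-- For `c = 2ν + 1` the Maclaurin series of `e^{az} G_ν(z)` satisfies this equation;
`a = 0` is Bessel's equation for `G_ν`. -/
def SolvesBesselODE (c a : R) (F : R⟦X⟧) : Prop :=
  X * d⁄dX R (d⁄dX R F) + C c * d⁄dX R F =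
    C (2 * a) * X * d⁄dX R F + C (a * c) * F + C (1 - a ^ 2) * X * F

theorem SolvesBesselODE.mul {c a : R} {B E : R⟦X⟧} (hB : SolvesBesselODE c 0 B)
    (hE : d⁄dX R E = C a * E) : SolvesBesselODE c a (E * B) := by
  have hCa (F : R⟦X⟧) : d⁄dX R (C a * F) = C a * d⁄dX R F := by
    simp [Derivation.leibniz]
  have h₁ : d⁄dX R (E * B) = C a * (E * B) + E * d⁄dX R B := by
    rw [Derivation.leibniz, hE, smul_eq_mul, smul_eq_mul]; ring
  have h₂ : d⁄dX R (E * d⁄dX R B) = C a * (E * d⁄dX R B) + E * d⁄dX R (d⁄dX R B) := by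
    rw [Derivation.leibniz, hE, smul_eq_mul, smul_eq_mul]; ring
  unfold SolvesBesselODE at hB ⊢
  simp only [mul_zero, map_zero, zero_mul, add_zero, zero_pow two_ne_zero, sub_zero, map_one,
    one_mul] at hB
  rw [h₁, map_add, hCa, h₂, h₁]
  simp only [map_mul, map_sub, map_pow, map_one, map_ofNat]
  linear_combination E * hB

theorem SolvesBesselODE.coeff_add_two {c a : R} {F : R⟦X⟧} (hF : SolvesBesselODE c a F)
    (m : ℕ) :
    (m + 2) * (m + 1 + c) * coeff (m + 2) F =
      a * (2 * m + 2 + c) * coeff (m + 1) F + (1 - a ^ 2) * coeff m F := by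
  have h := congrArg (coeff (m + 1)) hF
  simp only [mul_assoc, LinearMap.map_add, coeff_succ_X_mul, coeff_C_mul, coeff_derivative] at h
  push_cast at h
  linear_combination h

theorem derivative_rescale_exp {A : Type*} [CommRing A] [Algebra ℚ A] (a : A) :
    d⁄dX A (rescale a (exp A)) = C a * rescale a (exp A) := by
  ext n
  have h : (1 / (n + 1)! : ℚ) * (n + 1) = 1 / n ! := by
    rw [Nat.factorial_succ]; push_cast; field_simp
  simp only [coeff_derivative, coeff_rescale, coeff_exp, coeff_C_mul]
  rw [← h, map_mul, map_add, map_natCast, map_one, pow_succ]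
  ring

end BesselODE

section Maclaurin

variable {𝕜 : Type*} [NontriviallyNormedField 𝕜]

theorem HasFPowerSeriesOnBall.comp_sq {f : 𝕜 → 𝕜} {F : 𝕜⟦X⟧}
    (hf : HasFPowerSeriesOnBall f (ofScalars 𝕜 (coeff · F)) 0 ⊤) :
    HasFPowerSeriesOnBall (fun z ↦ f (z ^ 2))
      (ofScalars 𝕜 (coeff · (expand 2 two_ne_zero F))) 0 ⊤ := by
  have hcoeff_odd (k : ℕ) : coeff (2 * k + 1) (expand 2 two_ne_zero F) = 0 :=
    coeff_expand_of_not_dvd _ _ _ (by omega)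
  have hradius : (ofScalars 𝕜 (coeff · F)).radius = ⊤ := top_le_iff.1 hf.r_le
  refine ⟨?_, ENNReal.zero_lt_top, fun {y} _ ↦ ?_⟩
  · refine (FormalMultilinearSeries.radius_eq_top_of_summable_norm _ fun r ↦ ?_).ge
    refine Summable.even_add_odd ?_ (by simp [hcoeff_odd])
    have := (ofScalars 𝕜 (coeff · F)).summable_norm_mul_pow (r := r ^ 2) (by simp [hradius])
    simp only [ofScalars_norm, coeff_expand_mul, pow_mul] at this ⊢
    exact_mod_cast this
  · have h := hf.hasSum (y := y ^ 2) (by simp)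
    simp only [ofScalars_apply_eq, zero_add] at h ⊢
    have hsum_even : HasSum (fun k ↦ coeff (2 * k) (expand 2 two_ne_zero F) • y ^ (2 * k))
        (f (y ^ 2)) := by
      simpa only [coeff_expand_mul, pow_mul] using h
    have hsum_odd :
        HasSum (fun k ↦ coeff (2 * k + 1) (expand 2 two_ne_zero F) • y ^ (2 * k + 1)) 0 := by
      simp only [hcoeff_odd, zero_smul]
      exact hasSum_zero
    simpa only [add_zero] using
      HasSum.even_add_odd (f := fun n ↦ coeff n (expand 2 two_ne_zero F) • y ^ n) hsum_even hsum_odd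

noncomputable def maclaurinSeries (f : 𝕜 → 𝕜) : 𝕜⟦X⟧ :=
  mk fun n ↦ iteratedDeriv n f 0 / n !

theorem maclaurinSeries_const_mul (c : 𝕜) (f : 𝕜 → 𝕜) :
    maclaurinSeries (fun z ↦ c * f z) = C c * maclaurinSeries f := by
  ext n
  simp [maclaurinSeries, iteratedDeriv_const_mul_field, mul_div_assoc]

variable [CompleteSpace 𝕜]

theorem maclaurinSeries_sub {f g : 𝕜 → 𝕜} (hf : AnalyticAt 𝕜 f 0) (hg : AnalyticAt 𝕜 g 0) :
    maclaurinSeries (fun z ↦ f z - g z) = maclaurinSeries f - maclaurinSeries g := by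
  ext n
  simp only [maclaurinSeries, coeff_mk, map_sub, ← sub_div]
  rw [← iteratedDeriv_sub hf.contDiffAt hg.contDiffAt]
  rfl

variable [CharZero 𝕜]

theorem maclaurinSeries_mul {f g : 𝕜 → 𝕜} (hf : AnalyticAt 𝕜 f 0) (hg : AnalyticAt 𝕜 g 0) :
    maclaurinSeries (fun z ↦ f z * g z) = maclaurinSeries f * maclaurinSeries g := by
  ext n
  simp only [maclaurinSeries, coeff_mk, iteratedDeriv_fun_mul hf.contDiffAt hg.contDiffAt,
    coeff_mul, Finset.Nat.sum_antidiagonal_eq_sum_range_succ_mk, Finset.sum_div]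
  refine Finset.sum_congr rfl fun i hi ↦ ?_
  rw [Nat.cast_choose 𝕜 (Finset.mem_range_succ_iff.1 hi)]
  field_simp [Nat.factorial_ne_zero]

theorem HasFPowerSeriesAt.maclaurinSeries_eq {f : 𝕜 → 𝕜} {F : 𝕜⟦X⟧}
    (hf : HasFPowerSeriesAt f (ofScalars 𝕜 (coeff · F)) 0) : maclaurinSeries f = F := by
  ext n
  have := FormalMultilinearSeries.ofScalars_series_injective 𝕜 𝕜
    (hf.analyticAt.hasFPowerSeriesAt.eq_formalMultilinearSeries hf)
  simpa [maclaurinSeries] using congrFun this n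

end Maclaurin

theorem maclaurinSeries_cexp_mul (a : ℂ) :
    maclaurinSeries (fun z ↦ exp (a * z)) = rescale a (exp ℂ) := by
  ext n
  simp [maclaurinSeries, coeff_rescale, coeff_exp, div_eq_mul_inv]

section Bessel

noncomputable def besselTerm (ν : ℂ) (k : ℕ) : ℂ := ((4 : ℂ) ^ k * k ! * Gamma (ν + k + 1))⁻¹

noncomputable def besselSeries (ν : ℂ) : ℂ⟦X⟧ := expand 2 two_ne_zero (mk (besselTerm ν))

variable {ν : ℂ}

theorem Gamma_add_natCast_add_one_ne_zero (hν : ∀ k : ℕ, ν + k + 1 ≠ 0) (k : ℕ) :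
    Gamma (ν + k + 1) ≠ 0 :=
  Gamma_ne_zero fun m hm ↦ hν (k + m) (by push_cast; linear_combination hm)

theorem besselTerm_ne_zero (hν : ∀ k : ℕ, ν + k + 1 ≠ 0) (k : ℕ) : besselTerm ν k ≠ 0 := by
  simp [besselTerm, Nat.factorial_ne_zero, Gamma_add_natCast_add_one_ne_zero hν]

theorem besselTerm_succ (hν : ∀ k : ℕ, ν + k + 1 ≠ 0) (k : ℕ) :
    besselTerm ν (k + 1) = besselTerm ν k * (4 * (k + 1) * (ν + k + 1))⁻¹ := by
  have hΓ : Gamma (ν + ↑(k + 1) + 1) = (ν + k + 1) * Gamma (ν + k + 1) := by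
    rw [← Gamma_add_one _ (hν k)]; push_cast; ring_nf
  simp only [besselTerm, hΓ, Nat.factorial_succ, pow_succ]
  push_cast
  simp only [mul_inv]
  ring

theorem radius_ofScalars_besselTerm (hν : ∀ k : ℕ, ν + k + 1 ≠ 0) :
    (ofScalars ℂ (besselTerm ν)).radius = ⊤ := by
  refine FormalMultilinearSeries.ofScalars_radius_eq_top_of_tendsto ℂ _
    (.of_forall (besselTerm_ne_zero hν)) ?_
  have hratio (k : ℕ) : ‖besselTerm ν (k + 1)‖ / ‖besselTerm ν k‖ =
      (4 * (k + 1) : ℝ)⁻¹ * ‖ν + k + 1‖⁻¹ := by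
    rw [besselTerm_succ hν, norm_mul,
      mul_div_cancel_left₀ _ (norm_ne_zero_iff.2 (besselTerm_ne_zero hν k)), norm_inv, norm_mul,
      mul_inv]
    congr
    exact_mod_cast Complex.norm_natCast (4 * (k + 1))
  have hlin : Tendsto (fun k : ℕ ↦ (4 * (k + 1) : ℝ)) atTop atTop :=
    (tendsto_atTop_add_const_right _ 1 tendsto_natCast_atTop_atTop).const_mul_atTop four_pos
  have hnorm : Tendsto (fun k : ℕ ↦ ‖ν + k + 1‖) atTop atTop :=
    tendsto_atTop_mono (fun k ↦ by simpa using re_le_norm (ν + k + 1)) <|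
      tendsto_atTop_add_const_right _ _ <|
        tendsto_atTop_add_const_left _ _ tendsto_natCast_atTop_atTop
  simpa only [hratio, mul_zero, Function.comp_def] using
    (tendsto_inv_atTop_zero.comp hlin).mul (tendsto_inv_atTop_zero.comp hnorm)

theorem hasFPowerSeriesOnBall_modBesselSeries (hν : ∀ k : ℕ, ν + k + 1 ≠ 0) :
    HasFPowerSeriesOnBall (modBesselSeries ν) (ofScalars ℂ (coeff · (besselSeries ν))) 0 ⊤ := by
  have hradius := radius_ofScalars_besselTerm hν
  have hB : HasFPowerSeriesOnBall (ofScalars ℂ (besselTerm ν)).sum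
      (ofScalars ℂ (coeff · (mk (besselTerm ν)))) 0 ⊤ := by
    simpa only [coeff_mk, hradius] using
      (ofScalars ℂ (besselTerm ν)).hasFPowerSeriesOnBall (by simp [hradius])
  have hsum : modBesselSeries ν = fun z ↦ (ofScalars ℂ (besselTerm ν)).sum (z ^ 2) := by
    ext z
    simp only [modBesselSeries, FormalMultilinearSeries.sum, ofScalars_apply_eq, besselTerm,
      smul_eq_mul, pow_mul, div_eq_inv_mul]
  rw [hsum]
  exact hB.comp_sq

theorem constantCoeff_besselSeries : constantCoeff (besselSeries ν) = (Gamma (ν + 1))⁻¹ := by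
  simp [besselSeries, besselTerm]

theorem coeff_one_besselSeries : coeff 1 (besselSeries ν) = 0 :=
  coeff_expand_of_not_dvd _ _ _ (by norm_num)

theorem coeff_besselSeries_add_two (hν : ∀ k : ℕ, ν + k + 1 ≠ 0) (m : ℕ) :
    (m + 2) * (2 * ν + m + 2) * coeff (m + 2) (besselSeries ν) = coeff m (besselSeries ν) := by
  obtain ⟨k, rfl | rfl⟩ := Nat.even_or_odd' m
  · rw [show 2 * k + 2 = 2 * (k + 1) by ring, besselSeries, coeff_expand_mul, coeff_expand_mul,
      coeff_mk, coeff_mk, besselTerm_succ hν]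
    have := hν k
    push_cast
    field_simp
    ring
  · simp [besselSeries, coeff_expand_of_not_dvd, show ¬ 2 ∣ 2 * k + 1 + 2 by omega,
      show ¬ 2 ∣ 2 * k + 1 by omega]

theorem solvesBesselODE_besselSeries (hν : ∀ k : ℕ, ν + k + 1 ≠ 0) :
    SolvesBesselODE (2 * ν + 1) 0 (besselSeries ν) := by
  unfold SolvesBesselODE
  ext (_ | m)
  · simp only [mul_assoc, LinearMap.map_add, coeff_zero_X_mul, coeff_C_mul, coeff_derivative,
      zero_add, coeff_one_besselSeries]
    ring
  · have := coeff_besselSeries_add_two hν m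
    simp only [mul_assoc, LinearMap.map_add, coeff_succ_X_mul, coeff_C_mul, coeff_derivative]
    push_cast
    linear_combination this

end Bessel

section NormCoeff

variable {ν : ℂ}

theorem add_natCast_add_one_ne_zero (hν : ∀ n : ℕ, 2 * ν + n + 1 ≠ 0) (k : ℕ) : ν + k + 1 ≠ 0 :=
  fun h ↦ hν (2 * k + 1) (by push_cast; linear_combination 2 * h)

theorem normCoeff_eq_coeff_maclaurinSeries (h : ℂ → ℂ) (n : ℕ) :
    normCoeff ν h n =
      Gamma (ν + 1) * coeff n (maclaurinSeries fun z ↦ h z * modBesselSeries ν z) := by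
  rw [maclaurinSeries, coeff_mk]
  rfl

theorem normCoeff_cexp_mul (hν : ∀ k : ℕ, ν + k + 1 ≠ 0) (a : ℂ) (n : ℕ) :
    normCoeff ν (fun z ↦ exp (a * z)) n =
      Gamma (ν + 1) * coeff n (rescale a (exp ℂ) * besselSeries ν) := by
  have hG := hasFPowerSeriesOnBall_modBesselSeries hν
  rw [normCoeff_eq_coeff_maclaurinSeries, maclaurinSeries_mul (by fun_prop) hG.analyticAt,
    maclaurinSeries_cexp_mul, hG.hasFPowerSeriesAt.maclaurinSeries_eq]

theorem normCoeff_cexp_mul_zero (hν : ∀ k : ℕ, ν + k + 1 ≠ 0) (a : ℂ) :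
    normCoeff ν (fun z ↦ exp (a * z)) 0 = 1 := by
  have hΓ : Gamma (ν + 1) ≠ 0 := by simpa using Gamma_add_natCast_add_one_ne_zero hν 0
  rw [normCoeff_cexp_mul hν, coeff_zero_eq_constantCoeff_apply, map_mul,
    constantCoeff_besselSeries, ← coeff_zero_eq_constantCoeff_apply, coeff_rescale, coeff_exp]
  field_simp
  simp

theorem normCoeff_cexp_mul_one (hν : ∀ k : ℕ, ν + k + 1 ≠ 0) (a : ℂ) :
    normCoeff ν (fun z ↦ exp (a * z)) 1 = a := by
  have hΓ : Gamma (ν + 1) ≠ 0 := by simpa using Gamma_add_natCast_add_one_ne_zero hν 0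
  rw [normCoeff_cexp_mul hν, coeff_mul, Finset.Nat.sum_antidiagonal_succ]
  simp [constantCoeff_besselSeries, coeff_one_besselSeries]
  field_simp

theorem normCoeff_cexp_mul_succ (hν : ∀ n : ℕ, 2 * ν + n + 1 ≠ 0) (a : ℂ) {n : ℕ}
    (hn : 1 ≤ n) :
    normCoeff ν (fun z ↦ exp (a * z)) (n + 1) =
      a * (2 * ν + 2 * n + 1) / ((n + 1) * (2 * ν + n + 1)) *
          normCoeff ν (fun z ↦ exp (a * z)) n +
        (1 - a ^ 2) / ((n + 1) * (2 * ν + n + 1)) * normCoeff ν (fun z ↦ exp (a * z)) (n - 1) := by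
  obtain ⟨m, rfl⟩ := Nat.exists_eq_add_of_le' hn
  have hν' := add_natCast_add_one_ne_zero hν
  have hrec := ((solvesBesselODE_besselSeries hν').mul (derivative_rescale_exp a)).coeff_add_two m
  have hm : (m : ℂ) + 1 + 1 ≠ 0 := by exact_mod_cast Nat.succ_ne_zero (m + 1)
  have hνm : 2 * ν + (m + 1 : ℕ) + 1 ≠ 0 := hν (m + 1)
  simp only [normCoeff_cexp_mul hν', Nat.add_sub_cancel]
  push_cast at hνm ⊢
  rw [div_mul_eq_mul_div, div_mul_eq_mul_div, ← add_div, eq_div_iff (mul_ne_zero hm hνm)]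
  linear_combination Gamma (ν + 1) * hrec

theorem normCoeff_sin_mul (hν : ∀ k : ℕ, ν + k + 1 ≠ 0) (p : ℂ) (n : ℕ) :
    normCoeff ν (fun z ↦ Complex.sin (p * z)) n =
      (normCoeff ν (fun z ↦ exp (I * p * z)) n - normCoeff ν (fun z ↦ exp (-(I * p) * z)) n) /
        (2 * I) := by
  have hG := (hasFPowerSeriesOnBall_modBesselSeries hν).analyticAt
  have hsin : (fun z ↦ Complex.sin (p * z) * modBesselSeries ν z) = fun z ↦ (2 * I)⁻¹ *
      (exp (I * p * z) * modBesselSeries ν z - exp (-(I * p) * z) * modBesselSeries ν z) := by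
    ext z
    rw [Complex.sin, show -(p * z) * I = -(I * p) * z by ring, show p * z * I = I * p * z by ring]
    simp only [neg_mul]
    field_simp
    linear_combination (exp (-(I * p * z)) - exp (I * p * z)) * modBesselSeries ν z * I_sq
  have h₁ : AnalyticAt ℂ (fun z ↦ exp (I * p * z) * modBesselSeries ν z) 0 :=
    (by fun_prop : AnalyticAt ℂ (fun z ↦ exp (I * p * z)) 0).mul hG
  have h₂ : AnalyticAt ℂ (fun z ↦ exp (-(I * p) * z) * modBesselSeries ν z) 0 :=
    (by fun_prop : AnalyticAt ℂ (fun z ↦ exp (-(I * p) * z)) 0).mul hG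
  rw [normCoeff_eq_coeff_maclaurinSeries, hsin, maclaurinSeries_const_mul,
    maclaurinSeries_sub h₁ h₂, coeff_C_mul, map_sub, normCoeff_eq_coeff_maclaurinSeries,
    normCoeff_eq_coeff_maclaurinSeries]
  ring

end NormCoeff


theorem sin_besselI_coeff_recurrence (ν p : ℂ) (hν : ∀ n : ℕ, 2 * ν + (n : ℂ) + 1 ≠ 0)
    (u : ℕ → ℂ) (hu : ∀ n, u n = normCoeff ν (fun z => Complex.exp (Complex.I * p * z)) n)
    (v : ℕ → ℂ) (hv : ∀ n, v n = normCoeff ν (fun z => Complex.exp (-(Complex.I * p) * z)) n)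
    (w : ℕ → ℂ) (hw : ∀ n, w n = normCoeff ν (fun z => Complex.sin (p * z)) n) :
    (∀ n : ℕ, w n = (u n - v n) / (2 * Complex.I)) ∧ u 0 = 1 ∧ u 1 = Complex.I * p ∧ v 0 = 1 ∧ v 1 = -(Complex.I * p) ∧
    (∀ n : ℕ, 1 ≤ n →
      u (n + 1) = (Complex.I * p * (2 * ν + 2 * ((n : ℂ)) + 1) / ((((n : ℂ)) + 1) * (2 * ν + ((n : ℂ)) + 1))) * u n + ((p ^ 2 + 1) / ((((n : ℂ)) + 1) * (2 * ν + ((n : ℂ)) + 1))) * u (n - 1) ∧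
      v (n + 1) = (-(Complex.I * p * (2 * ν + 2 * ((n : ℂ)) + 1)) / ((((n : ℂ)) + 1) * (2 * ν + ((n : ℂ)) + 1))) * v n + ((p ^ 2 + 1) / ((((n : ℂ)) + 1) * (2 * ν + ((n : ℂ)) + 1))) * v (n - 1)) := by
  have hν' := add_natCast_add_one_ne_zero hν
  have hp : 1 - (I * p) ^ 2 = p ^ 2 + 1 := by rw [mul_pow, I_sq]; ring
  refine ⟨fun n ↦ by rw [hw, hu, hv, normCoeff_sin_mul hν'],
    by rw [hu, normCoeff_cexp_mul_zero hν'], by rw [hu, normCoeff_cexp_mul_one hν'],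
    by rw [hv, normCoeff_cexp_mul_zero hν'], by rw [hv, normCoeff_cexp_mul_one hν'],
    fun n hn ↦ ⟨?_, ?_⟩⟩
  · simp only [hu]
    rw [normCoeff_cexp_mul_succ hν _ hn, hp]
  · simp only [hv]
    rw [normCoeff_cexp_mul_succ hν _ hn, neg_sq, hp, neg_mul]
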